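/- arXiv:1105.2149 — 4 statements merged into one kernel-verified Lean document; each statement's English description precedes it below -/
import Mathlib

section
/- Let E be a nonempty subset of a Banach space X and suppose T : E → P(E) satisfies condition (C). Then H(Tx, Ty) ≤ 2·dist(x, Tx) + ‖x − y‖ holds for all x, y ∈ E. -/
/-!
Let `d = dist(x, Tx)` and suppose `‖x - y‖ < d / 2`, the only case in which condition (C) says
nothing directly. Take a nearest point `z ∈ Tx`, so `‖x - z‖ = d`. Condition (C) applies to
`(x, z)` and gives `H(Tx, Tz) ≤ d`, hence `dist(z, Tz) ≤ d` because `z ∈ Tx`. Since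
`‖z - y‖ ≥ d - ‖x - y‖ > d / 2`, it applies to `(z, y)` as well, giving
`H(Tz, Ty) ≤ ‖z - y‖ ≤ d + ‖x - y‖`, and the triangle inequality for `H` through `Tz` concludes.
-/

open Metric Bornology

section ConditionC

variable {α : Type*} [PseudoMetricSpace α]

def SatisfiesConditionC (E : Set α) (T : α → Set α) : Prop :=
  ∀ x ∈ E, ∀ y ∈ E,
    (1 / 2) * infDist x (T x) ≤ dist x y → hausdorffDist (T x) (T y) ≤ dist x y

namespace SatisfiesConditionC

variable {E : Set α} {T : α → Set α} {x y z : α}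

theorem hausdorffDist_le_infDist_of_dist_eq (hC : SatisfiesConditionC E T) (hx : x ∈ E)
    (hz : z ∈ E) (hxz : dist x z = infDist x (T x)) :
    hausdorffDist (T x) (T z) ≤ infDist x (T x) :=
  hxz ▸ hC x hx z hz (by rw [hxz]; linarith [infDist_nonneg (x := x) (s := T x)])

theorem infDist_le_infDist_of_dist_eq (hC : SatisfiesConditionC E T) (hx : x ∈ E)
    (hz : z ∈ E) (hzT : z ∈ T x) (hfin : hausdorffEDist (T x) (T z) ≠ ⊤)
    (hxz : dist x z = infDist x (T x)) :
    infDist z (T z) ≤ infDist x (T x) :=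
  (infDist_le_hausdorffDist_of_mem hzT hfin).trans
    (hC.hausdorffDist_le_infDist_of_dist_eq hx hz hxz)

theorem hausdorffDist_le_two_mul_infDist_add_dist (hC : SatisfiesConditionC E T)
    (hfin : ∀ x ∈ E, ∀ y ∈ E, hausdorffEDist (T x) (T y) ≠ ⊤)
    (hmaps : ∀ x ∈ E, T x ⊆ E) (hnear : ∀ x ∈ E, ∃ z ∈ T x, dist x z = infDist x (T x))
    (hx : x ∈ E) (hy : y ∈ E) :
    hausdorffDist (T x) (T y) ≤ 2 * infDist x (T x) + dist x y := by
  rcases le_or_gt ((1 / 2) * infDist x (T x)) (dist x y) with hxy | hxy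
  · linarith [hC x hx y hy hxy, infDist_nonneg (x := x) (s := T x)]
  obtain ⟨z, hzT, hxz⟩ := hnear x hx
  have hz : z ∈ E := hmaps x hx hzT
  have hHxz := hC.hausdorffDist_le_infDist_of_dist_eq hx hz hxz
  have hzz := hC.infDist_le_infDist_of_dist_eq hx hz hzT (hfin x hx z hz) hxz
  have hzy_lower : dist x z - dist x y ≤ dist z y := by
    linarith [dist_triangle x y z, dist_comm y z]
  have hzy_upper : dist z y ≤ dist x z + dist x y := by
    linarith [dist_triangle z x y, dist_comm z x]
  have hHzy : hausdorffDist (T z) (T y) ≤ dist z y := hC z hz y hy (by linarith)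
  calc hausdorffDist (T x) (T y)
      ≤ hausdorffDist (T x) (T z) + hausdorffDist (T z) (T y) :=
        hausdorffDist_triangle (hfin x hx z hz)
    _ ≤ 2 * infDist x (T x) + dist x y := by linarith

end SatisfiesConditionC

end ConditionC

theorem condition_C_hausdorffDist_estimate_general
    {X : Type*} [NormedAddCommGroup X]
    (E : Set X) (T : X → Set X)
    (hT : ∀ x ∈ E, (T x).Nonempty ∧ IsBounded (T x) ∧ T x ⊆ E ∧
      ∀ p : X, ∃ q ∈ T x, ‖p - q‖ = infDist p (T x))
    (hC : ∀ x ∈ E, ∀ y ∈ E,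
      (1 / 2) * infDist x (T x) ≤ ‖x - y‖ →
        hausdorffDist (T x) (T y) ≤ ‖x - y‖) :
    ∀ x ∈ E, ∀ y ∈ E,
      hausdorffDist (T x) (T y) ≤ 2 * infDist x (T x) + ‖x - y‖ := by
  intro x hx y hy
  have hC' : SatisfiesConditionC E T := fun x hx y hy => by
    simpa only [dist_eq_norm] using hC x hx y hy
  have hfin : ∀ x ∈ E, ∀ y ∈ E, hausdorffEDist (T x) (T y) ≠ ⊤ := fun x hx y hy =>
    hausdorffEDist_ne_top_of_nonempty_of_bounded (hT x hx).1 (hT y hy).1 (hT x hx).2.1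
      (hT y hy).2.1
  have hnear : ∀ x ∈ E, ∃ z ∈ T x, dist x z = infDist x (T x) := by
    simpa only [dist_eq_norm] using fun x hx => (hT x hx).2.2.2 x
  simpa only [dist_eq_norm] using
    hC'.hausdorffDist_le_two_mul_infDist_add_dist hfin (fun x hx => (hT x hx).2.2.1) hnear hx hy

/-- If `T : E → P(E)` (nonempty proximal bounded subsets of `E`) satisfies
condition (C), then `H(Tx,Ty) ≤ 2 dist(x,Tx) + ‖x-y‖` for all `x, y ∈ E`. -/
theorem condition_C_hausdorffDist_estimate
    {X : Type*} [NormedAddCommGroup X] [NormedSpace ℝ X] [CompleteSpace X]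
    (E : Set X) (hE : E.Nonempty) (T : X → Set X)
    (hT : ∀ x ∈ E, (T x).Nonempty ∧ IsBounded (T x) ∧ T x ⊆ E ∧
      ∀ p : X, ∃ q ∈ T x, ‖p - q‖ = infDist p (T x))
    (hC : ∀ x ∈ E, ∀ y ∈ E,
      (1 / 2) * infDist x (T x) ≤ ‖x - y‖ →
        hausdorffDist (T x) (T y) ≤ ‖x - y‖) :
    ∀ x ∈ E, ∀ y ∈ E,
      hausdorffDist (T x) (T y) ≤ 2 * infDist x (T x) + ‖x - y‖ :=
  condition_C_hausdorffDist_estimate_general E T hT hC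
end

section
/- Let X be a uniformly convex Banach space and let B_r(0) = {x ∈ X : ‖x‖ ≤ r} for r > 0. Then there exists a continuous, strictly increasing, convex function φ : [0,∞) → [0,∞) with φ(0) = 0 such that ‖αx + βy + γz + ηw‖² ≤ α‖x‖² + β‖y‖² + γ‖z‖² + η‖w‖² − αβ·φ(‖x − y‖) for all x, y, z, w ∈ B_r(0) and all α, β, γ, η ∈ [0,1] with α + β + γ + η = 1. -/
/-!
In a uniformly convex space the midpoint defect `‖x‖² + ‖y‖² - ‖x + y‖² / 2` of `‖·‖²` is bounded
below on the ball of radius `r` by a positive constant depending only on a lower bound for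
`‖x - y‖`: rescale by the larger of the two norms and use the modulus of convexity. The infimum of
the defect over pairs at distance at least `t` is therefore monotone in `t` and positive for
`t > 0`, so its scaled primitive `φ t = (2r)⁻¹ ∫₀ᵗ` is continuous, strictly increasing, convex, and
still below the defect. This makes `‖·‖²` uniformly convex on the ball with modulus `φ`; the
four-point inequality follows by merging the first two points into one and applying Jensen's
inequality to the three points that remain.
-/

open Metric Set MeasureTheory intervalIntegral

section MonotonePrimitive

variable {g : ℝ → ℝ}

theorem Monotone.intervalIntegral_le_sub_mul (hg : Monotone g) {a b : ℝ} (hab : a ≤ b) :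
    ∫ s in a..b, g s ≤ (b - a) * g b := by
  simpa using integral_mono_on (μ := volume) hab hg.intervalIntegrable intervalIntegrable_const
    fun s hs => hg hs.2

theorem Monotone.sub_mul_le_intervalIntegral (hg : Monotone g) {a b : ℝ} (hab : a ≤ b) :
    (b - a) * g a ≤ ∫ s in a..b, g s := by
  simpa using integral_mono_on (μ := volume) hab intervalIntegrable_const hg.intervalIntegrable
    fun s hs => hg hs.1

theorem Monotone.convexOn_primitive (hg : Monotone g) (a : ℝ) :
    ConvexOn ℝ univ fun t => ∫ s in a..t, g s := by
  refine convexOn_of_slope_mono_adjacent convex_univ fun {x y z} _ _ hxy hyz => ?_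
  simp only [integral_interval_sub_left hg.intervalIntegrable hg.intervalIntegrable]
  calc (∫ s in x..y, g s) / (y - x) ≤ g y := by
        rw [div_le_iff₀ (sub_pos.2 hxy), mul_comm]
        exact hg.intervalIntegral_le_sub_mul hxy.le
    _ ≤ (∫ s in y..z, g s) / (z - y) := by
        rw [le_div_iff₀ (sub_pos.2 hyz), mul_comm]
        exact hg.sub_mul_le_intervalIntegral hyz.le

theorem Monotone.strictMonoOn_primitive (hg : Monotone g) {a : ℝ}
    (hpos : ∀ s, a < s → 0 < g s) :
    StrictMonoOn (fun t => ∫ s in a..t, g s) (Ici a) := by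
  intro x hx y _ hxy
  rw [← sub_pos, integral_interval_sub_left hg.intervalIntegrable hg.intervalIntegrable]
  exact intervalIntegral_pos_of_pos_on hg.intervalIntegrable
    (fun s hs => hpos s (lt_of_le_of_lt hx hs.1)) hxy

end MonotonePrimitive

section NormSqGap

variable {E : Type*} [SeminormedAddCommGroup E]

/-- In an inner product space this is `‖x - y‖ ^ 2 / 2`. -/
noncomputable def normSqGap (x y : E) : ℝ := ‖x‖ ^ 2 + ‖y‖ ^ 2 - ‖x + y‖ ^ 2 / 2

theorem normSqGap_comm (x y : E) : normSqGap x y = normSqGap y x := by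
  rw [normSqGap, normSqGap, add_comm x, add_comm (‖x‖ ^ 2)]

theorem normSqGap_nonneg (x y : E) : 0 ≤ normSqGap x y := by
  have := pow_le_pow_left₀ (norm_nonneg _) (norm_add_le x y) 2
  rw [normSqGap]
  nlinarith [sq_nonneg (‖x‖ - ‖y‖)]

theorem norm_smul_add_smul_sq_le [NormedSpace ℝ E] (x y : E) {a b : ℝ} (ha : 0 ≤ a) (hb : 0 ≤ b)
    (hab : a + b = 1) :
    ‖a • x + b • y‖ ^ 2 ≤ a * ‖x‖ ^ 2 + b * ‖y‖ ^ 2 - a * b * normSqGap x y := by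
  wlog hle : a ≤ b generalizing a b x y
  · have := this y x hb ha (by linarith) (by linarith)
    rwa [add_comm (b • y), normSqGap_comm, add_comm (b * _), mul_comm b a] at this
  have hnorm : ‖a • x + b • y‖ ≤ 2 * a * (‖x + y‖ / 2) + (b - a) * ‖y‖ := by
    calc ‖a • x + b • y‖ = ‖(2 * a) • (2 : ℝ)⁻¹ • (x + y) + (b - a) • y‖ := by
          congr 1; module
      _ ≤ ‖(2 * a) • (2 : ℝ)⁻¹ • (x + y)‖ + ‖(b - a) • y‖ := norm_add_le _ _
      _ = 2 * a * (‖x + y‖ / 2) + (b - a) * ‖y‖ := by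
          rw [norm_smul_of_nonneg (by positivity), norm_smul_of_nonneg (by norm_num),
            norm_smul_of_nonneg (by linarith)]
          ring
  have hsq : ‖a • x + b • y‖ ^ 2 ≤ 2 * a * (‖x + y‖ / 2) ^ 2 + (b - a) * ‖y‖ ^ 2 := by
    nlinarith [pow_le_pow_left₀ (norm_nonneg _) hnorm 2,
      mul_nonneg (mul_nonneg ha (sub_nonneg.2 hle)) (sq_nonneg (‖x + y‖ / 2 - ‖y‖))]
  have hgap := mul_nonneg ha (normSqGap_nonneg x y)
  rw [normSqGap] at hgap ⊢
  nlinarith [mul_le_of_le_one_left hgap (show b ≤ 1 by linarith)]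

end NormSqGap

section UniformConvexOn

variable {E : Type*} [NormedAddCommGroup E] [NormedSpace ℝ E] {s : Set E} {φ : ℝ → ℝ} {f : E → ℝ}

theorem UniformConvexOn.convexOn_of_nonneg (hf : UniformConvexOn s φ f)
    (hφ : ∀ t, 0 ≤ t → 0 ≤ φ t) : ConvexOn ℝ s f :=
  ⟨hf.1, fun _ hx _ hy _ _ ha hb hab => (hf.2 hx hy ha hb hab).trans <|
    sub_le_self _ <| mul_nonneg (mul_nonneg ha hb) (hφ _ (norm_nonneg _))⟩

theorem UniformConvexOn.map_add_add_add_le (hf : UniformConvexOn s φ f)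
    (hφ : ∀ t, 0 ≤ t → 0 ≤ φ t) {x y z w : E} (hx : x ∈ s) (hy : y ∈ s) (hz : z ∈ s)
    (hw : w ∈ s) {α β γ η : ℝ} (hα : 0 ≤ α) (hβ : 0 ≤ β) (hγ : 0 ≤ γ) (hη : 0 ≤ η)
    (hsum : α + β + γ + η = 1) :
    f (α • x + β • y + γ • z + η • w) ≤
      α * f x + β * f y + γ * f z + η * f w - α * β * φ ‖x - y‖ := by
  have hconv := hf.convexOn_of_nonneg hφ
  rcases (add_nonneg hα hβ).eq_or_lt with hαβ | hαβ
  · obtain ⟨rfl, rfl⟩ : α = 0 ∧ β = 0 := ⟨by linarith, by linarith⟩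
    simpa using hconv.2 hz hw hγ hη (by linarith)
  set σ := α + β
  set p := (α / σ) • x + (β / σ) • y
  have hweights : α / σ + β / σ = 1 := by rw [← add_div]; exact div_self hαβ.ne'
  have hp : p ∈ s := hf.1 hx hy (by positivity) (by positivity) hweights
  have hpoint : α • x + β • y + γ • z + η • w = σ • p + γ • z + η • w := by
    simp only [p, smul_add, smul_smul, mul_div_cancel₀ _ hαβ.ne']
  have hjensen : f (σ • p + γ • z + η • w) ≤ σ * f p + γ * f z + η * f w := by
    have := hconv.map_sum_le (t := Finset.univ) (w := ![σ, γ, η]) (p := ![p, z, w])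
      (by simp [Fin.forall_fin_succ, hαβ.le, hγ, hη]) (by simp [Fin.sum_univ_three]; linarith)
      (by simp [Fin.forall_fin_succ, hp, hz, hw])
    simpa [Fin.sum_univ_three, add_assoc] using this
  have htwo : σ * f p ≤ α * f x + β * f y - α * β / σ * φ ‖x - y‖ := by
    refine (mul_le_mul_of_nonneg_left (hf.2 hx hy (by positivity) (by positivity) hweights)
      hαβ.le).trans_eq ?_
    rw [smul_eq_mul, smul_eq_mul]
    field_simp
  have hdiv : α * β * φ ‖x - y‖ ≤ α * β / σ * φ ‖x - y‖ := by
    refine mul_le_mul_of_nonneg_right ?_ (hφ _ (norm_nonneg _))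
    exact le_div_self (by positivity) hαβ (by linarith)
  rw [hpoint]
  linarith

theorem uniformConvexOn_norm_sq (hs : Convex ℝ s)
    (hφ : ∀ x ∈ s, ∀ y ∈ s, φ ‖x - y‖ ≤ normSqGap x y) :
    UniformConvexOn s φ fun x => ‖x‖ ^ 2 :=
  ⟨hs, fun x hx y hy a b ha hb hab => (norm_smul_add_smul_sq_le x y ha hb hab).trans <| by
    simp only [smul_eq_mul]
    have := mul_le_mul_of_nonneg_left (hφ x hx y hy) (mul_nonneg ha hb)
    linarith⟩

end UniformConvexOn

section UniformConvexSpace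

variable (E : Type*) [NormedAddCommGroup E] [NormedSpace ℝ E] [UniformConvexSpace E]

theorem exists_forall_norm_add_le_two_sub_mul {ε : ℝ} (hε : 0 < ε) :
    ∃ δ, 0 < δ ∧ ∀ ⦃x y : E⦄, ‖x‖ ≤ ‖y‖ → ε * ‖y‖ ≤ ‖x - y‖ → ‖x + y‖ ≤ (2 - δ) * ‖y‖ := by
  obtain ⟨δ, hδ, h⟩ := exists_forall_closed_ball_dist_add_le_two_sub E hε
  refine ⟨δ, hδ, fun x y hxy hεxy => ?_⟩
  rcases (norm_nonneg y).eq_or_lt with hy | hy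
  · rw [← hy] at hxy ⊢
    simp [norm_le_zero_iff.1 hxy, ← hy]
  have hscale : ∀ v : E, ‖‖y‖⁻¹ • v‖ = ‖v‖ / ‖y‖ := fun v => by
    rw [norm_smul_of_nonneg (by positivity), inv_mul_eq_div]
  have := @h (‖y‖⁻¹ • x) (by rw [hscale]; exact div_le_one_of_le₀ hxy hy.le) (‖y‖⁻¹ • y)
    (by rw [hscale, div_self hy.ne'])
    (by rw [← smul_sub, hscale, le_div_iff₀ hy]; exact hεxy)
  rwa [← smul_add, hscale, div_le_iff₀ hy] at this

theorem exists_pos_le_normSqGap {ε : ℝ} (hε : 0 < ε) {r : ℝ} (hr : 0 < r) :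
    ∃ c, 0 < c ∧ ∀ ⦃x y : E⦄, ‖x‖ ≤ r → ‖y‖ ≤ r → ε ≤ ‖x - y‖ → c ≤ normSqGap x y := by
  obtain ⟨δ, hδ, h⟩ := exists_forall_norm_add_le_two_sub_mul E (div_pos hε hr)
  refine ⟨δ ^ 2 * ε ^ 2 / 32, by positivity, fun x y hx hy hxy => ?_⟩
  wlog hle : ‖x‖ ≤ ‖y‖ generalizing x y
  · rw [normSqGap_comm]
    exact this y x hy hx (norm_sub_rev x y ▸ hxy) (le_of_not_ge hle)
  have hsum : ‖x + y‖ ≤ (2 - δ) * ‖y‖ := h hle <| by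
    calc ε / r * ‖y‖ ≤ ε / r * r := by gcongr
      _ = ε := div_mul_cancel₀ ε hr.ne'
      _ ≤ ‖x - y‖ := hxy
  have hdist := hxy.trans (norm_sub_le x y)
  have hn := norm_add_le x y
  rw [normSqGap]
  -- Either the norms differ by at least `δ ε / 4`, or `hsum` bounds `‖x + y‖` away from
  -- `‖x‖ + ‖y‖ ≥ ε`.
  rcases le_total (‖y‖ - ‖x‖) (δ * ε / 4) with hclose | hfar
  · have hδ2 : δ ≤ 2 := by nlinarith [norm_nonneg (x + y)]
    have hdefect : δ * ε / 4 ≤ ‖x‖ + ‖y‖ - ‖x + y‖ := by nlinarith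
    nlinarith [mul_le_mul hdefect hdist hε.le (by linarith), norm_nonneg (x + y),
      mul_pos hδ hε, sq_nonneg (‖y‖ - ‖x‖)]
  · nlinarith [pow_le_pow_left₀ (norm_nonneg _) hn 2,
      pow_le_pow_left₀ (by positivity) hfar 2]

end UniformConvexSpace

section Modulus

variable {E : Type*} [NormedAddCommGroup E] {r : ℝ}

variable (E) in
/-- Capping `t` at the diameter `2 * r` of the ball keeps this set nonempty. -/
def normSqGapSet (r t : ℝ) : Set ℝ :=
  {c | ∃ x y : E, ‖x‖ ≤ r ∧ ‖y‖ ≤ r ∧ min t (2 * r) ≤ ‖x - y‖ ∧ normSqGap x y = c}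

variable (E) in
noncomputable def normSqGapModulus (r t : ℝ) : ℝ := sInf (normSqGapSet E r t)

theorem normSqGapSet_bddBelow (t : ℝ) : BddBelow (normSqGapSet E r t) :=
  ⟨0, by rintro _ ⟨x, y, -, -, -, rfl⟩; exact normSqGap_nonneg x y⟩

theorem normSqGapModulus_nonneg (t : ℝ) : 0 ≤ normSqGapModulus E r t :=
  Real.sInf_nonneg <| by rintro _ ⟨x, y, -, -, -, rfl⟩; exact normSqGap_nonneg x y

theorem normSqGapModulus_le {x y : E} (hx : ‖x‖ ≤ r) (hy : ‖y‖ ≤ r) :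
    normSqGapModulus E r ‖x - y‖ ≤ normSqGap x y :=
  csInf_le (normSqGapSet_bddBelow _) ⟨x, y, hx, hy, min_le_left _ _, rfl⟩

variable [NormedSpace ℝ E] [Nontrivial E]

theorem normSqGapSet_nonempty (hr : 0 ≤ r) (t : ℝ) : (normSqGapSet E r t).Nonempty := by
  obtain ⟨u, hu⟩ := exists_norm_eq E hr
  refine ⟨_, u, -u, hu.le, (norm_neg u).trans_le hu.le, ?_, rfl⟩
  rw [sub_neg_eq_add, ← two_smul ℝ, norm_smul, hu, Real.norm_two]
  exact min_le_right _ _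

theorem normSqGapModulus_mono (hr : 0 ≤ r) : Monotone (normSqGapModulus E r) := by
  intro s t hst
  refine csInf_le_csInf (normSqGapSet_bddBelow s) (normSqGapSet_nonempty hr t) ?_
  rintro _ ⟨x, y, hx, hy, hxy, rfl⟩
  exact ⟨x, y, hx, hy, (min_le_min_right _ hst).trans hxy, rfl⟩

theorem normSqGapModulus_pos [UniformConvexSpace E] (hr : 0 < r) {t : ℝ} (ht : 0 < t) :
    0 < normSqGapModulus E r t := by
  have hcap : 0 < min t (2 * r) := lt_min ht (by positivity)
  obtain ⟨c, hc, h⟩ := exists_pos_le_normSqGap E hcap hr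
  refine hc.trans_le <| le_csInf (normSqGapSet_nonempty hr.le t) ?_
  rintro _ ⟨x, y, hx, hy, hxy, rfl⟩
  exact h hx hy hxy

variable (E) in
/-- Averaging the monotone modulus makes it convex while keeping it below the modulus on
`[0, 2 * r]`. -/
noncomputable def normSqConvexModulus (r t : ℝ) : ℝ :=
  ∫ s in (0 : ℝ)..t, normSqGapModulus E r s / (2 * r)

theorem normSqConvexModulus_le (hr : 0 < r) {x y : E} (hx : ‖x‖ ≤ r) (hy : ‖y‖ ≤ r) :
    normSqConvexModulus E r ‖x - y‖ ≤ normSqGap x y := by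
  have hdiam : ‖x - y‖ ≤ 2 * r := by linarith [norm_sub_le x y]
  have hg := normSqGapModulus_nonneg (E := E) (r := r) ‖x - y‖
  calc normSqConvexModulus E r ‖x - y‖
      ≤ (‖x - y‖ - 0) * (normSqGapModulus E r ‖x - y‖ / (2 * r)) :=
        ((normSqGapModulus_mono hr.le).div_const (by positivity)).intervalIntegral_le_sub_mul
          (norm_nonneg _)
    _ ≤ normSqGapModulus E r ‖x - y‖ := by
        rw [sub_zero, mul_div_assoc', div_le_iff₀ (by positivity), mul_comm]
        exact mul_le_mul_of_nonneg_left hdiam hg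
    _ ≤ normSqGap x y := normSqGapModulus_le hx hy

end Modulus

theorem exists_convex_modulus_le_normSqGap {X : Type*} [NormedAddCommGroup X] [NormedSpace ℝ X]
    [UniformConvexSpace X] {r : ℝ} (hr : 0 < r) :
    ∃ φ : ℝ → ℝ, ContinuousOn φ (Ici 0) ∧ StrictMonoOn φ (Ici 0) ∧ ConvexOn ℝ (Ici 0) φ ∧
      φ 0 = 0 ∧ ∀ x ∈ closedBall (0 : X) r, ∀ y ∈ closedBall (0 : X) r,
        φ ‖x - y‖ ≤ normSqGap x y := by
  rcases subsingleton_or_nontrivial X with hX | hX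
  · refine ⟨id, continuousOn_id, strictMonoOn_id, convexOn_id (convex_Ici 0), rfl,
      fun x _ y _ => ?_⟩
    simpa [Subsingleton.elim x y] using normSqGap_nonneg y y
  have hmono := (normSqGapModulus_mono (E := X) hr.le).div_const (by positivity : 0 < 2 * r).le
  refine ⟨normSqConvexModulus X r,
    (continuous_primitive (fun _ _ => hmono.intervalIntegrable) 0).continuousOn,
    hmono.strictMonoOn_primitive fun _ ht => div_pos (normSqGapModulus_pos hr ht) (by positivity),
    (hmono.convexOn_primitive 0).subset (subset_univ _) (convex_Ici 0),
    integral_same, fun x hx y hy => ?_⟩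
  rw [mem_closedBall_zero_iff] at hx hy
  exact normSqConvexModulus_le hr hx hy

theorem uniformly_convex_four_point_inequality_general
    {X : Type*} [NormedAddCommGroup X] [NormedSpace ℝ X]
    [UniformConvexSpace X] (r : ℝ) (hr : 0 < r) :
    ∃ φ : ℝ → ℝ, ContinuousOn φ (Ici 0) ∧ StrictMonoOn φ (Ici 0) ∧
      ConvexOn ℝ (Ici 0) φ ∧ (∀ t ∈ Ici (0 : ℝ), 0 ≤ φ t) ∧ φ 0 = 0 ∧
      ∀ x ∈ closedBall (0 : X) r, ∀ y ∈ closedBall (0 : X) r,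
        ∀ z ∈ closedBall (0 : X) r, ∀ w ∈ closedBall (0 : X) r,
          ∀ α ∈ Icc (0 : ℝ) 1, ∀ β ∈ Icc (0 : ℝ) 1, ∀ γ ∈ Icc (0 : ℝ) 1,
            ∀ η ∈ Icc (0 : ℝ) 1, α + β + γ + η = 1 →
              ‖α • x + β • y + γ • z + η • w‖ ^ 2 ≤
                α * ‖x‖ ^ 2 + β * ‖y‖ ^ 2 + γ * ‖z‖ ^ 2 + η * ‖w‖ ^ 2
                  - α * β * φ ‖x - y‖ := by
  obtain ⟨φ, hcont, hmono, hconv, hzero, hle⟩ := exists_convex_modulus_le_normSqGap (X := X) hr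
  have hnonneg : ∀ t ∈ Ici (0 : ℝ), 0 ≤ φ t := fun t ht =>
    hzero ▸ hmono.monotoneOn self_mem_Ici ht ht
  refine ⟨φ, hcont, hmono, hconv, hnonneg, hzero, ?_⟩
  intro x hx y hy z hz w hw α hα β hβ γ hγ η hη hsum
  exact (uniformConvexOn_norm_sq (convex_closedBall 0 r) hle).map_add_add_add_le hnonneg
    hx hy hz hw hα.1 hβ.1 hγ.1 hη.1 hsum

/-- In a uniformly convex Banach space, for each `r > 0` there is a continuous,
strictly increasing, convex function `φ : [0,∞) → [0,∞)` with `φ 0 = 0` such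
that the four-point convexity inequality holds on the ball of radius `r`. -/
theorem uniformly_convex_four_point_inequality
    {X : Type*} [NormedAddCommGroup X] [NormedSpace ℝ X] [CompleteSpace X]
    [UniformConvexSpace X] (r : ℝ) (hr : 0 < r) :
    ∃ φ : ℝ → ℝ, ContinuousOn φ (Ici 0) ∧ StrictMonoOn φ (Ici 0) ∧
      ConvexOn ℝ (Ici 0) φ ∧ (∀ t ∈ Ici (0 : ℝ), 0 ≤ φ t) ∧ φ 0 = 0 ∧
      ∀ x ∈ closedBall (0 : X) r, ∀ y ∈ closedBall (0 : X) r,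
        ∀ z ∈ closedBall (0 : X) r, ∀ w ∈ closedBall (0 : X) r,
          ∀ α ∈ Icc (0 : ℝ) 1, ∀ β ∈ Icc (0 : ℝ) 1, ∀ γ ∈ Icc (0 : ℝ) 1,
            ∀ η ∈ Icc (0 : ℝ) 1, α + β + γ + η = 1 →
              ‖α • x + β • y + γ • z + η • w‖ ^ 2 ≤
                α * ‖x‖ ^ 2 + β * ‖y‖ ^ 2 + γ * ‖z‖ ^ 2 + η * ‖w‖ ^ 2
                  - α * β * φ ‖x - y‖ :=
  uniformly_convex_four_point_inequality_general r hr
end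

section
/- Let E be a nonempty convex subset of a Banach space X, let T_i : E → CB(E), i = 1,2,3, satisfy condition (C) with F = ∩_{i=1}^3 F(T_i) ≠ ∅ and T_i(p) = {p} for each p ∈ F, and let {x_n} be generated by the iterative process (A) with Σ b_n < ∞, Σ e_n < ∞ and Σ γ_n < ∞. Then for every p ∈ F, the limit lim_{n→∞} ‖x_n − p‖ exists. -/
/-!
Condition (C) at a point `p` with `T p = {p}` is automatic, because `dist(p, T p) = 0`; it gives
`H(T p, T q) ≤ ‖p - q‖`, so every point of `T q` lies within `‖q - p‖` of `p`: each `Tᵢ` is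
quasi-nonexpansive at `p`. Pushing this through the three convex combinations of process (A), one
step increases `‖xₙ - p‖` by at most `M (bₙ + eₙ + γₙ)`, where `M` bounds the perturbations
`sₙ, s'ₙ, s''ₙ` around `p`. A sequence bounded below with `dₙ₊₁ ≤ dₙ + εₙ` and `∑ εₙ < ∞` converges,
since `dₙ + ∑_{k ≥ n} εₖ` is nonincreasing and bounded below.
-/

open Metric Bornology Filter

section Combinations

variable {X : Type*}

theorem Convex.combo₃_mem [AddCommGroup X] [Module ℝ X] {E : Set X} (hE : Convex ℝ E)
    {x y z : X} (hx : x ∈ E) (hy : y ∈ E) (hz : z ∈ E) {a b : ℝ} (ha : 0 ≤ a) (hb : 0 ≤ b)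
    (hab : a + b ≤ 1) : (1 - a - b) • x + a • y + b • z ∈ E := by
  simpa [Fin.sum_univ_three] using hE.sum_mem (t := Finset.univ) (w := ![1 - a - b, a, b])
    (z := ![x, y, z]) (by intro i _; fin_cases i <;> simp <;> linarith)
    (by simp [Fin.sum_univ_three]; ring) (by intro i _; fin_cases i <;> assumption)

theorem Convex.combo₄_mem [AddCommGroup X] [Module ℝ X] {E : Set X} (hE : Convex ℝ E)
    {x y z w : X} (hx : x ∈ E) (hy : y ∈ E) (hz : z ∈ E) (hw : w ∈ E) {a b c : ℝ}
    (ha : 0 ≤ a) (hb : 0 ≤ b) (hc : 0 ≤ c) (habc : a + b + c ≤ 1) :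
    (1 - a - b - c) • x + a • y + b • z + c • w ∈ E := by
  simpa [Fin.sum_univ_four, add_assoc] using hE.sum_mem (t := Finset.univ)
    (w := ![1 - a - b - c, a, b, c]) (z := ![x, y, z, w])
    (by intro i _; fin_cases i <;> simp <;> linarith)
    (by simp [Fin.sum_univ_four]; ring) (by intro i _; fin_cases i <;> assumption)

variable [SeminormedAddCommGroup X] [NormedSpace ℝ X]

theorem norm_combo₃_sub_le (p x y z : X) {a b : ℝ} (ha : 0 ≤ a) (hb : 0 ≤ b)
    (hab : a + b ≤ 1) :
    ‖(1 - a - b) • x + a • y + b • z - p‖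
      ≤ (1 - a - b) * ‖x - p‖ + a * ‖y - p‖ + b * ‖z - p‖ := by
  have h₀ : 0 ≤ 1 - a - b := by linarith
  calc ‖(1 - a - b) • x + a • y + b • z - p‖
      = ‖(1 - a - b) • (x - p) + a • (y - p) + b • (z - p)‖ := by congr 1; module
    _ ≤ _ := norm_add₃_le
    _ = _ := by rw [norm_smul_of_nonneg h₀, norm_smul_of_nonneg ha, norm_smul_of_nonneg hb]

theorem norm_combo₄_sub_le (p x y z w : X) {a b c : ℝ} (ha : 0 ≤ a) (hb : 0 ≤ b)
    (hc : 0 ≤ c) (habc : a + b + c ≤ 1) :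
    ‖(1 - a - b - c) • x + a • y + b • z + c • w - p‖
      ≤ (1 - a - b - c) * ‖x - p‖ + a * ‖y - p‖ + b * ‖z - p‖ + c * ‖w - p‖ := by
  have h₀ : 0 ≤ 1 - a - b - c := by linarith
  calc ‖(1 - a - b - c) • x + a • y + b • z + c • w - p‖
      = ‖(1 - a - b - c) • (x - p) + a • (y - p) + b • (z - p) + c • (w - p)‖ := by
        congr 1; module
    _ ≤ _ := norm_add₄_le
    _ = _ := by
      rw [norm_smul_of_nonneg h₀, norm_smul_of_nonneg ha, norm_smul_of_nonneg hb,
        norm_smul_of_nonneg hc]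

theorem norm_combo₃_sub_le_add {p x y z : X} {a b D M : ℝ} (ha : 0 ≤ a) (hb : 0 ≤ b)
    (hab : a + b ≤ 1) (hD : 0 ≤ D) (hx : ‖x - p‖ ≤ D) (hy : ‖y - p‖ ≤ D)
    (hz : ‖z - p‖ ≤ M) :
    ‖(1 - a - b) • x + a • y + b • z - p‖ ≤ D + b * M := by
  have h₀ : 0 ≤ 1 - a - b := by linarith
  calc _ ≤ (1 - a - b) * ‖x - p‖ + a * ‖y - p‖ + b * ‖z - p‖ :=
        norm_combo₃_sub_le p x y z ha hb hab
    _ ≤ (1 - a - b) * D + a * D + b * M := by gcongr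
    _ ≤ D + b * M := by nlinarith

theorem norm_combo₄_sub_le_add {p x y z w : X} {a b c D δ M : ℝ} (ha : 0 ≤ a) (hb : 0 ≤ b)
    (hc : 0 ≤ c) (habc : a + b + c ≤ 1) (hD : 0 ≤ D) (hδ : 0 ≤ δ) (hx : ‖x - p‖ ≤ D)
    (hy : ‖y - p‖ ≤ D + δ) (hz : ‖z - p‖ ≤ D + δ) (hw : ‖w - p‖ ≤ M) :
    ‖(1 - a - b - c) • x + a • y + b • z + c • w - p‖ ≤ D + δ + c * M := by
  have h₀ : 0 ≤ 1 - a - b - c := by linarith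
  calc _ ≤ (1 - a - b - c) * ‖x - p‖ + a * ‖y - p‖ + b * ‖z - p‖ + c * ‖w - p‖ :=
        norm_combo₄_sub_le p x y z w ha hb hc habc
    _ ≤ (1 - a - b - c) * D + a * (D + δ) + b * (D + δ) + c * M := by gcongr
    _ ≤ D + δ + c * M := by nlinarith

end Combinations

section ConditionC

variable {X : Type*} [SeminormedAddCommGroup X]

def ConditionC (E : Set X) (T : X → Set X) : Prop :=
  ∀ p ∈ E, ∀ q ∈ E,
    (1 / 2) * infDist p (T p) ≤ ‖p - q‖ → hausdorffDist (T p) (T q) ≤ ‖p - q‖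

def IsQuasiNonexpansiveAt (E : Set X) (T : X → Set X) (p : X) : Prop :=
  ∀ q ∈ E, ∀ t ∈ T q, ‖t - p‖ ≤ ‖q - p‖

theorem ConditionC.isQuasiNonexpansiveAt {E : Set X} {T : X → Set X} (hC : ConditionC E T)
    (hT : ∀ q ∈ E, (T q).Nonempty ∧ IsBounded (T q)) {p : X} (hp : p ∈ E) (hTp : T p = {p}) :
    IsQuasiNonexpansiveAt E T p := by
  intro q hq t ht
  have hH : hausdorffDist (T p) (T q) ≤ ‖p - q‖ := hC p hp q hq (by simp [hTp])
  have hfin : hausdorffEDist (T q) (T p) ≠ ⊤ :=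
    hausdorffEDist_ne_top_of_nonempty_of_bounded (hT q hq).1 (hTp ▸ Set.singleton_nonempty p)
      (hT q hq).2 (hTp ▸ isBounded_singleton)
  calc ‖t - p‖ = infDist t (T p) := by rw [hTp, infDist_singleton, dist_eq_norm]
    _ ≤ hausdorffDist (T q) (T p) := infDist_le_hausdorffDist_of_mem ht hfin
    _ ≤ ‖q - p‖ := by rw [hausdorffDist_comm, norm_sub_rev q p]; exact hH

end ConditionC

theorem processA_step {X : Type*} [SeminormedAddCommGroup X] [NormedSpace ℝ X] {E : Set X}
    (hE : Convex ℝ E) {T₁ T₂ T₃ : X → Set X}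
    (hT₁ : ∀ q ∈ E, T₁ q ⊆ E) (hT₂ : ∀ q ∈ E, T₂ q ⊆ E) (hT₃ : ∀ q ∈ E, T₃ q ⊆ E) {p : X}
    (hp₁ : IsQuasiNonexpansiveAt E T₁ p) (hp₂ : IsQuasiNonexpansiveAt E T₂ p)
    (hp₃ : IsQuasiNonexpansiveAt E T₃ p) {a b c d e α β γ M : ℝ}
    (ha : 0 ≤ a) (hb : 0 ≤ b) (hab : a + b ≤ 1)
    (hc : 0 ≤ c) (hd : 0 ≤ d) (he : 0 ≤ e) (hcde : c + d + e ≤ 1)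
    (hα : 0 ≤ α) (hβ : 0 ≤ β) (hγ : 0 ≤ γ) (hαβγ : α + β + γ ≤ 1) (hM : 0 ≤ M)
    {x w y x' z u u' v v' s s' s'' : X} (hx : x ∈ E) (hs : s ∈ E) (hs' : s' ∈ E)
    (hs'' : s'' ∈ E) (hsM : ‖s - p‖ ≤ M) (hs'M : ‖s' - p‖ ≤ M) (hs''M : ‖s'' - p‖ ≤ M)
    (hz : z ∈ T₁ x) (hu' : u' ∈ T₁ x) (hu : u ∈ T₂ w) (hv' : v' ∈ T₂ w) (hv : v ∈ T₃ y)
    (hw : w = (1 - a - b) • x + a • z + b • s)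
    (hy : y = (1 - c - d - e) • x + c • u + d • u' + e • s')
    (hx' : x' = (1 - α - β - γ) • x + α • v + β • v' + γ • s'') :
    x' ∈ E ∧ ‖x' - p‖ ≤ ‖x - p‖ + M * (b + e + γ) := by
  have hwE : w ∈ E := hw ▸ hE.combo₃_mem hx (hT₁ x hx hz) hs ha hb hab
  have hwp : ‖w - p‖ ≤ ‖x - p‖ + b * M :=
    hw ▸ norm_combo₃_sub_le_add ha hb hab (norm_nonneg _) le_rfl (hp₁ x hx z hz) hsM
  have hyE : y ∈ E := hy ▸ hE.combo₄_mem hx (hT₂ w hwE hu) (hT₁ x hx hu') hs' hc hd he hcde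
  have hyp : ‖y - p‖ ≤ ‖x - p‖ + b * M + e * M := hy ▸ norm_combo₄_sub_le_add hc hd he hcde
    (norm_nonneg _) (by positivity) le_rfl ((hp₂ w hwE u hu).trans hwp)
    (by linarith [hp₁ x hx u' hu', mul_nonneg hb hM]) hs'M
  refine ⟨hx' ▸ hE.combo₄_mem hx (hT₃ y hyE hv) (hT₂ w hwE hv') hs'' hα hβ hγ hαβγ, ?_⟩
  have hx'p := hx' ▸ norm_combo₄_sub_le_add hα hβ hγ hαβγ (norm_nonneg _)
    (by positivity : 0 ≤ b * M + e * M) le_rfl (by linarith [hp₃ y hyE v hv])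
    (by linarith [hp₂ w hwE v' hv', mul_nonneg he hM]) hs''M
  linarith

theorem Real.exists_tendsto_of_le_add_of_summable {d ε : ℕ → ℝ} (hd : BddBelow (Set.range d))
    (hε : Summable ε) (hrec : ∀ n, d (n + 1) ≤ d n + ε n) :
    ∃ l, Tendsto d atTop (nhds l) := by
  set tail : ℕ → ℝ := fun n => ∑' k, ε (k + n)
  have htail : Tendsto tail atTop (nhds 0) := tendsto_sum_nat_add ε
  have htail_succ (n : ℕ) : tail n = ε n + tail (n + 1) := by
    simpa [tail, add_assoc, add_comm 1] using ((summable_nat_add_iff n).2 hε).tsum_eq_zero_add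
  have hanti : Antitone (d + tail) := antitone_nat_of_succ_le fun n => by
    simp only [Pi.add_apply]; linarith [hrec n, htail_succ n]
  have hbdd : BddBelow (Set.range (d + tail)) := by
    obtain ⟨A, hA⟩ := hd
    obtain ⟨B, hB⟩ := htail.bddBelow_range
    exact ⟨A + B, by
      rintro _ ⟨n, rfl⟩; exact add_le_add (hA ⟨n, rfl⟩) (hB ⟨n, rfl⟩)⟩
  refine ⟨⨅ n, (d + tail) n, ?_⟩
  simpa using (tendsto_atTop_ciInf hanti hbdd).sub htail

theorem three_step_norm_limit_exists_general
    {X : Type*} [NormedAddCommGroup X] [NormedSpace ℝ X]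
    (E : Set X) (hEcv : Convex ℝ E)
    (T1 T2 T3 : X → Set X)
    (hT1 : ∀ p ∈ E, (T1 p).Nonempty ∧ IsClosed (T1 p) ∧ IsBounded (T1 p) ∧ T1 p ⊆ E)
    (hT2 : ∀ p ∈ E, (T2 p).Nonempty ∧ IsClosed (T2 p) ∧ IsBounded (T2 p) ∧ T2 p ⊆ E)
    (hT3 : ∀ p ∈ E, (T3 p).Nonempty ∧ IsClosed (T3 p) ∧ IsBounded (T3 p) ∧ T3 p ⊆ E)
    (hC1 : ∀ p ∈ E, ∀ q ∈ E,
      (1 / 2) * infDist p (T1 p) ≤ ‖p - q‖ → hausdorffDist (T1 p) (T1 q) ≤ ‖p - q‖)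
    (hC2 : ∀ p ∈ E, ∀ q ∈ E,
      (1 / 2) * infDist p (T2 p) ≤ ‖p - q‖ → hausdorffDist (T2 p) (T2 q) ≤ ‖p - q‖)
    (hC3 : ∀ p ∈ E, ∀ q ∈ E,
      (1 / 2) * infDist p (T3 p) ≤ ‖p - q‖ → hausdorffDist (T3 p) (T3 q) ≤ ‖p - q‖)
    (F : Set X) (hF : F = {p | p ∈ E ∧ p ∈ T1 p ∧ p ∈ T2 p ∧ p ∈ T3 p})
    (hFsingle : ∀ p ∈ F, T1 p = {p} ∧ T2 p = {p} ∧ T3 p = {p})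
    (a b c d e al bt gm : ℕ → ℝ)
    (ha : ∀ n, a n ∈ Set.Icc (0 : ℝ) 1) (hb : ∀ n, b n ∈ Set.Icc (0 : ℝ) 1)
    (hc : ∀ n, c n ∈ Set.Icc (0 : ℝ) 1) (hd : ∀ n, d n ∈ Set.Icc (0 : ℝ) 1)
    (he : ∀ n, e n ∈ Set.Icc (0 : ℝ) 1)
    (hal : ∀ n, al n ∈ Set.Icc (0 : ℝ) 1) (hbt : ∀ n, bt n ∈ Set.Icc (0 : ℝ) 1)
    (hgm : ∀ n, gm n ∈ Set.Icc (0 : ℝ) 1)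
    (hab : ∀ n, a n + b n ≤ 1)
    (hcde : ∀ n, c n + d n + e n ≤ 1)
    (habg : ∀ n, al n + bt n + gm n ≤ 1)
    (hbs : Summable b) (hes : Summable e) (hgms : Summable gm)
    (x w y z u u2 v v2 s s2 s3 : ℕ → X)
    (hx1 : x 1 ∈ E)
    (hsE : ∀ n, s n ∈ E) (hs2E : ∀ n, s2 n ∈ E) (hs3E : ∀ n, s3 n ∈ E)
    (hsbd : IsBounded (Set.range s)) (hs2bd : IsBounded (Set.range s2))
    (hs3bd : IsBounded (Set.range s3))
    (hz : ∀ n, z n ∈ T1 (x n)) (hu2 : ∀ n, u2 n ∈ T1 (x n))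
    (hu : ∀ n, u n ∈ T2 (w n)) (hv2 : ∀ n, v2 n ∈ T2 (w n))
    (hv : ∀ n, v n ∈ T3 (y n))
    (hw : ∀ n, w n = (1 - a n - b n) • x n + a n • z n + b n • s n)
    (hy : ∀ n, y n = (1 - c n - d n - e n) • x n + c n • u n + d n • u2 n + e n • s2 n)
    (hx : ∀ n, x (n + 1) =
      (1 - al n - bt n - gm n) • x n + al n • v n + bt n • v2 n + gm n • s3 n) :
    ∀ p ∈ F, ∃ l : ℝ, Tendsto (fun n => ‖x n - p‖) atTop (nhds l) := by
  intro p hpF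
  have hpE : p ∈ E := (hF ▸ hpF).1
  obtain ⟨hTp1, hTp2, hTp3⟩ := hFsingle p hpF
  have hp1 := ConditionC.isQuasiNonexpansiveAt hC1
    (fun q hq => ⟨(hT1 q hq).1, (hT1 q hq).2.2.1⟩) hpE hTp1
  have hp2 := ConditionC.isQuasiNonexpansiveAt hC2
    (fun q hq => ⟨(hT2 q hq).1, (hT2 q hq).2.2.1⟩) hpE hTp2
  have hp3 := ConditionC.isQuasiNonexpansiveAt hC3
    (fun q hq => ⟨(hT3 q hq).1, (hT3 q hq).2.2.1⟩) hpE hTp3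
  obtain ⟨M, hM0, hM⟩ := ((hsbd.union hs2bd).union hs3bd).subset_closedBall_lt 0 p
  have hsM (n : ℕ) : ‖s n - p‖ ≤ M ∧ ‖s2 n - p‖ ≤ M ∧ ‖s3 n - p‖ ≤ M := by
    simp only [← dist_eq_norm, ← mem_closedBall]
    exact ⟨hM (by simp), hM (by simp), hM (by simp)⟩
  have step (n : ℕ) (hxn : x n ∈ E) :=
    processA_step hEcv (fun q hq => (hT1 q hq).2.2.2) (fun q hq => (hT2 q hq).2.2.2)
      (fun q hq => (hT3 q hq).2.2.2) hp1 hp2 hp3 (ha n).1 (hb n).1 (hab n) (hc n).1 (hd n).1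
      (he n).1 (hcde n) (hal n).1 (hbt n).1 (hgm n).1 (habg n) hM0.le hxn (hsE n) (hs2E n)
      (hs3E n) (hsM n).1 (hsM n).2.1 (hsM n).2.2 (hz n) (hu2 n) (hu n) (hv2 n) (hv n) (hw n)
      (hy n) (hx n)
  -- Only `x 1` is assumed to lie in `E`, so the recursion is run on `n ↦ x (n + 1)`.
  have hxE (n : ℕ) : x (n + 1) ∈ E := Nat.rec hx1 (fun n h => (step (n + 1) h).1) n
  suffices ∃ l, Tendsto (fun n => ‖x (n + 1) - p‖) atTop (nhds l) from
    this.imp fun l => (tendsto_add_atTop_iff_nat 1).1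
  exact Real.exists_tendsto_of_le_add_of_summable ⟨0, by rintro _ ⟨n, rfl⟩; positivity⟩
    ((summable_nat_add_iff 1).2 (((hbs.add hes).add hgms).mul_left M))
    fun n => (step (n + 1) (hxE n)).2

/-- In the proof of Theorem 3.2: for every common fixed point p, the limit of
‖x_n - p‖ exists. -/
theorem three_step_norm_limit_exists
    {X : Type*} [NormedAddCommGroup X] [NormedSpace ℝ X] [CompleteSpace X]
    (E : Set X) (hEne : E.Nonempty) (hEcv : Convex ℝ E)
    (T1 T2 T3 : X → Set X)
    (hT1 : ∀ p ∈ E, (T1 p).Nonempty ∧ IsClosed (T1 p) ∧ IsBounded (T1 p) ∧ T1 p ⊆ E)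
    (hT2 : ∀ p ∈ E, (T2 p).Nonempty ∧ IsClosed (T2 p) ∧ IsBounded (T2 p) ∧ T2 p ⊆ E)
    (hT3 : ∀ p ∈ E, (T3 p).Nonempty ∧ IsClosed (T3 p) ∧ IsBounded (T3 p) ∧ T3 p ⊆ E)
    (hC1 : ∀ p ∈ E, ∀ q ∈ E,
      (1 / 2) * infDist p (T1 p) ≤ ‖p - q‖ → hausdorffDist (T1 p) (T1 q) ≤ ‖p - q‖)
    (hC2 : ∀ p ∈ E, ∀ q ∈ E,
      (1 / 2) * infDist p (T2 p) ≤ ‖p - q‖ → hausdorffDist (T2 p) (T2 q) ≤ ‖p - q‖)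
    (hC3 : ∀ p ∈ E, ∀ q ∈ E,
      (1 / 2) * infDist p (T3 p) ≤ ‖p - q‖ → hausdorffDist (T3 p) (T3 q) ≤ ‖p - q‖)
    (F : Set X) (hF : F = {p | p ∈ E ∧ p ∈ T1 p ∧ p ∈ T2 p ∧ p ∈ T3 p})
    (hFne : F.Nonempty)
    (hFsingle : ∀ p ∈ F, T1 p = {p} ∧ T2 p = {p} ∧ T3 p = {p})
    (a b c d e al bt gm : ℕ → ℝ)
    (ha : ∀ n, a n ∈ Set.Icc (0 : ℝ) 1) (hb : ∀ n, b n ∈ Set.Icc (0 : ℝ) 1)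
    (hc : ∀ n, c n ∈ Set.Icc (0 : ℝ) 1) (hd : ∀ n, d n ∈ Set.Icc (0 : ℝ) 1)
    (he : ∀ n, e n ∈ Set.Icc (0 : ℝ) 1)
    (hal : ∀ n, al n ∈ Set.Icc (0 : ℝ) 1) (hbt : ∀ n, bt n ∈ Set.Icc (0 : ℝ) 1)
    (hgm : ∀ n, gm n ∈ Set.Icc (0 : ℝ) 1)
    (hab : ∀ n, a n + b n ≤ 1)
    (hcde : ∀ n, c n + d n + e n ≤ 1)
    (habg : ∀ n, al n + bt n + gm n ≤ 1)
    (hbs : Summable b) (hes : Summable e) (hgms : Summable gm)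
    (x w y z u u2 v v2 s s2 s3 : ℕ → X)
    (hx1 : x 1 ∈ E)
    (hsE : ∀ n, s n ∈ E) (hs2E : ∀ n, s2 n ∈ E) (hs3E : ∀ n, s3 n ∈ E)
    (hsbd : IsBounded (Set.range s)) (hs2bd : IsBounded (Set.range s2))
    (hs3bd : IsBounded (Set.range s3))
    (hz : ∀ n, z n ∈ T1 (x n)) (hu2 : ∀ n, u2 n ∈ T1 (x n))
    (hu : ∀ n, u n ∈ T2 (w n)) (hv2 : ∀ n, v2 n ∈ T2 (w n))
    (hv : ∀ n, v n ∈ T3 (y n))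
    (hw : ∀ n, w n = (1 - a n - b n) • x n + a n • z n + b n • s n)
    (hy : ∀ n, y n = (1 - c n - d n - e n) • x n + c n • u n + d n • u2 n + e n • s2 n)
    (hx : ∀ n, x (n + 1) =
      (1 - al n - bt n - gm n) • x n + al n • v n + bt n • v2 n + gm n • s3 n) :
    ∀ p ∈ F, ∃ l : ℝ, Tendsto (fun n => ‖x n - p‖) atTop (nhds l) :=
  three_step_norm_limit_exists_general E hEcv T1 T2 T3 hT1 hT2 hT3 hC1 hC2 hC3 F hF hFsingle a b c d
    e al bt gm ha hb hc hd he hal hbt hgm hab hcde habg hbs hes hgms x w y z u u2 v v2 s s2 s3 hx1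
    hsE hs2E hs3E hsbd hs2bd hs3bd hz hu2 hu hv2 hv hw hy hx
end

section
/- Let E be a nonempty subset of a Banach space X and let T : E → P(E) be a multivalued mapping such that P_T satisfies condition (C), where P_T(x) = {y ∈ T(x) : ‖x − y‖ = dist(x, T(x))}. Then for every fixed point p of T: P_T(p) = {p}, and for every x ∈ E and every z ∈ P_T(x), ‖z − p‖ ≤ ‖x − p‖. -/
open Metric Bornology

/-- For a multivalued mapping `T`, `proxSet T x` is the set
`P_T(x) = {y ∈ Tx : ‖x - y‖ = dist(x, Tx)}`. -/
def proxSet {X : Type*} [NormedAddCommGroup X] (T : X → Set X) (x : X) : Set X :=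
  {y ∈ T x | ‖x - y‖ = Metric.infDist x (T x)}

/- A fixed point `p` of `T` is its own unique nearest point, so `P_T(p) = {p}`. Condition (C)
holds trivially for the pair `(p, x)`, since `dist(p, P_T p) = 0`; it bounds the Hausdorff
distance from `{p}` to `P_T(x)` by `‖p - x‖`, and hence the distance from every `z ∈ P_T(x)`
to `p`. That Hausdorff distance is a genuine one, not the junk value `0` of an infinite
distance, because `P_T(x)` lies on the sphere of radius `dist(x, Tx)` about `x`. -/

section ProxSet

variable {X : Type*} [NormedAddCommGroup X]

theorem proxSet_subset_sphere (T : X → Set X) (x : X) :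
    proxSet T x ⊆ sphere x (infDist x (T x)) := fun y hy => by
  rw [mem_sphere_comm, mem_sphere, dist_eq_norm]
  exact hy.2

theorem isBounded_proxSet (T : X → Set X) (x : X) : IsBounded (proxSet T x) :=
  isBounded_sphere.subset (proxSet_subset_sphere T x)

theorem proxSet_eq_singleton_of_mem {T : X → Set X} {p : X} (hp : p ∈ T p) :
    proxSet T p = {p} := by
  ext y
  simp only [proxSet, Set.mem_sep_iff, Set.mem_singleton_iff, infDist_zero_of_mem hp,
    norm_sub_eq_zero_iff]
  constructor
  · exact fun h => h.2.symm
  · rintro rfl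
    exact ⟨hp, rfl⟩

end ProxSet

theorem Metric.dist_le_hausdorffDist_singleton_of_mem {α : Type*} [PseudoMetricSpace α]
    {s : Set α} {z : α} (p : α) (hs : IsBounded s) (hz : z ∈ s) :
    dist z p ≤ hausdorffDist s {p} := by
  have hfin : hausdorffEDist s {p} ≠ ⊤ :=
    hausdorffEDist_ne_top_of_nonempty_of_bounded ⟨z, hz⟩ (Set.singleton_nonempty p) hs
      isBounded_singleton
  simpa only [infDist_singleton] using infDist_le_hausdorffDist_of_mem hz hfin

theorem proxSet_quasi_nonexpansive_general
    {X : Type*} [NormedAddCommGroup X]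
    (E : Set X) (T : X → Set X)
    (hC : ∀ x ∈ E, ∀ y ∈ E,
      (1 / 2) * infDist x (proxSet T x) ≤ ‖x - y‖ →
        hausdorffDist (proxSet T x) (proxSet T y) ≤ ‖x - y‖) :
    ∀ p ∈ E, p ∈ T p →
      proxSet T p = {p} ∧ ∀ x ∈ E, ∀ z ∈ proxSet T x, ‖z - p‖ ≤ ‖x - p‖ := by
  intro p hp hpT
  have hfix := proxSet_eq_singleton_of_mem hpT
  refine ⟨hfix, fun x hx z hz => ?_⟩
  have hcond : (1 / 2) * infDist p (proxSet T p) ≤ ‖p - x‖ := by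
    rw [hfix, infDist_singleton, dist_self, mul_zero]
    exact norm_nonneg _
  have hH := hC p hp x hx hcond
  rw [hfix, hausdorffDist_comm] at hH
  calc ‖z - p‖ = dist z p := (dist_eq_norm z p).symm
    _ ≤ hausdorffDist (proxSet T x) {p} :=
      dist_le_hausdorffDist_singleton_of_mem p (isBounded_proxSet T x) hz
    _ ≤ ‖p - x‖ := hH
    _ = ‖x - p‖ := norm_sub_rev p x

/-- If `T : E → P(E)` is such that `P_T` satisfies condition (C), then for
every fixed point `p` of `T` we have `P_T(p) = {p}` and every `z ∈ P_T(x)`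
satisfies `‖z - p‖ ≤ ‖x - p‖`. -/
theorem proxSet_quasi_nonexpansive
    {X : Type*} [NormedAddCommGroup X] [NormedSpace ℝ X] [CompleteSpace X]
    (E : Set X) (hE : E.Nonempty) (T : X → Set X)
    (hT : ∀ x ∈ E, (T x).Nonempty ∧ IsBounded (T x) ∧ T x ⊆ E ∧
      ∀ p : X, ∃ q ∈ T x, ‖p - q‖ = infDist p (T x))
    (hC : ∀ x ∈ E, ∀ y ∈ E,
      (1 / 2) * infDist x (proxSet T x) ≤ ‖x - y‖ →
        hausdorffDist (proxSet T x) (proxSet T y) ≤ ‖x - y‖) :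
    ∀ p ∈ E, p ∈ T p →
      proxSet T p = {p} ∧ ∀ x ∈ E, ∀ z ∈ proxSet T x, ‖z - p‖ ≤ ‖x - p‖ :=
  proxSet_quasi_nonexpansive_general E T hC
end
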